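/- Let i ∈ ℕ and let g : ℝ → ℝ be a continuous function for which there exist constants C > 0 and δ > 0 with |g(u)| ≤ C·e^{−δu} for all u ≥ 0. Then, as t → 0⁺, the integral ∫_{(0,2)} (1/(2t)) · g(r²/t) · r^{2i+1} dr converges; its limit equals (1/4)·∫_{(0,∞)} g(u) du if i = 0, and equals 0 if i ≥ 1. -/

import Mathlib

open MeasureTheory Filter Set

/-! The substitution `u = r²/t` turns the integral into `(t^i/4) ∫₀^{4/t} g(u) uⁱ du`.
Exponential decay makes `g(u) uⁱ` integrable on `(0, ∞)`, so the integral tends to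
`∫₀^∞ g(u) uⁱ du` as `t → 0⁺`, while the prefactor `t^i/4` tends to `1/4` for `i = 0` and to `0`
otherwise. -/

theorem integrableOn_Ioi_mul_pow_of_abs_le_exp {g : ℝ → ℝ} (i : ℕ) {C δ : ℝ} (hδ : 0 < δ)
    (hg : AEStronglyMeasurable g (volume.restrict (Ioi 0)))
    (hbound : ∀ u : ℝ, 0 ≤ u → |g u| ≤ C * Real.exp (-δ * u)) :
    IntegrableOn (fun u : ℝ => g u * u ^ i) (Ioi 0) := by
  have hdom : IntegrableOn (fun u : ℝ => C * (u ^ i * Real.exp (-δ * u))) (Ioi 0) := by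
    have hgamma := integrableOn_rpow_mul_exp_neg_mul_rpow (s := i) (p := 1)
      (by linarith [i.cast_nonneg (α := ℝ)]) zero_lt_one hδ
    simp only [Real.rpow_natCast, Real.rpow_one] at hgamma
    exact hgamma.const_mul C
  refine Integrable.mono' hdom (hg.mul (continuous_pow i).aestronglyMeasurable) ?_
  filter_upwards [ae_restrict_mem measurableSet_Ioi] with u (hu : 0 < u)
  calc ‖g u * u ^ i‖ = |g u| * u ^ i := by
        rw [norm_mul, Real.norm_eq_abs, Real.norm_of_nonneg (by positivity)]
    _ ≤ C * Real.exp (-δ * u) * u ^ i := by gcongr; exact hbound u hu.le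
    _ = C * (u ^ i * Real.exp (-δ * u)) := by ring

theorem setIntegral_Ioo_mul_pow_comp_sq_div (g : ℝ → ℝ) (i : ℕ) {a t : ℝ} (ha : 0 ≤ a)
    (ht : 0 < t) :
    ∫ r in Ioo 0 a, (1 / (2 * t)) * g (r ^ 2 / t) * r ^ (2 * i + 1)
      = (t ^ i / 4) * ∫ u in (0 : ℝ)..(a ^ 2 / t), g u * u ^ i := by
  have hsubst : (∫ r in (0 : ℝ)..a, (2 * r / t) • ((fun u => g u * u ^ i) ∘ fun r => r ^ 2 / t) r)
      = ∫ u in (0 : ℝ)..(a ^ 2 / t), g u * u ^ i := by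
    have hmono := intervalIntegral.integral_deriv_smul_comp_of_deriv_nonneg
      (f := fun r => r ^ 2 / t) (g := fun u => g u * u ^ i) (by fun_prop)
      (fun r _ => by simpa using (hasDerivAt_pow 2 r).div_const t)
      (fun r hr => by rw [min_eq_left ha] at hr; exact div_nonneg (by linarith [hr.1]) ht.le)
    beta_reduce at hmono
    rwa [zero_pow two_ne_zero, zero_div] at hmono
  rw [← integral_Ioc_eq_integral_Ioo, ← intervalIntegral.integral_of_le ha, ← hsubst,
    ← intervalIntegral.integral_const_mul]
  refine intervalIntegral.integral_congr fun r _ => ?_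
  simp only [Function.comp_apply, smul_eq_mul, div_pow]
  field_simp
  ring

theorem tendsto_intervalIntegral_div_nhdsGT_zero {f : ℝ → ℝ} (hf : IntegrableOn f (Ioi 0))
    {c : ℝ} (hc : 0 < c) :
    Tendsto (fun t : ℝ => ∫ u in (0 : ℝ)..(c / t), f u) (nhdsWithin 0 (Ioi 0))
      (nhds (∫ u in Ioi (0 : ℝ), f u)) := by
  have hupper : Tendsto (fun t : ℝ => c / t) (nhdsWithin 0 (Ioi 0)) atTop := by
    simpa [div_eq_mul_inv] using tendsto_inv_nhdsGT_zero.const_mul_atTop hc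
  exact (intervalIntegral_tendsto_integral_Ioi 0 hf tendsto_id).comp hupper

theorem cone_type_one_contribution_general (i : ℕ) (g : ℝ → ℝ) (hg : Continuous g)
    (C δ : ℝ) (hδ : 0 < δ)
    (hbound : ∀ u : ℝ, 0 ≤ u → |g u| ≤ C * Real.exp (-δ * u)) :
    Tendsto
      (fun t : ℝ => ∫ r in Set.Ioo (0 : ℝ) 2, (1 / (2 * t)) * g (r ^ 2 / t) * r ^ (2 * i + 1))
      (nhdsWithin 0 (Set.Ioi 0))
      (nhds (if i = 0 then (1 / 4) * ∫ u in Set.Ioi (0 : ℝ), g u else 0)) := by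
  have hint := integrableOn_Ioi_mul_pow_of_abs_le_exp i hδ hg.aestronglyMeasurable hbound
  have hprefactor : Tendsto (fun t : ℝ => t ^ i / 4) (nhdsWithin 0 (Ioi 0))
      (nhds ((0 : ℝ) ^ i / 4)) :=
    ((continuous_pow i).div_const 4).continuousWithinAt.tendsto
  have hlim := hprefactor.mul (tendsto_intervalIntegral_div_nhdsGT_zero hint four_pos)
  have hsubst : ∀ᶠ t in nhdsWithin 0 (Ioi 0),
      (t ^ i / 4) * (∫ u in (0 : ℝ)..(4 / t), g u * u ^ i)
        = ∫ r in Ioo (0 : ℝ) 2, (1 / (2 * t)) * g (r ^ 2 / t) * r ^ (2 * i + 1) := by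
    filter_upwards [self_mem_nhdsWithin] with t (ht : 0 < t)
    rw [setIntegral_Ioo_mul_pow_comp_sq_div g i zero_le_two ht]
    norm_num
  convert hlim.congr' hsubst using 2
  rcases eq_or_ne i 0 with rfl | hi
  · simp
  · simp [hi]

/-- For a continuous, exponentially decaying `g`, the integrals
`∫_{(0,2)} (1/(2t)) g(r²/t) r^{2i+1} dr` converge as `t → 0⁺` to `(1/4)∫₀^∞ g(u) du` when
`i = 0` and to `0` when `i ≥ 1`. -/
theorem cone_type_one_contribution (i : ℕ) (g : ℝ → ℝ) (hg : Continuous g)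
    (C δ : ℝ) (hC : 0 < C) (hδ : 0 < δ)
    (hbound : ∀ u : ℝ, 0 ≤ u → |g u| ≤ C * Real.exp (-δ * u)) :
    Tendsto
      (fun t : ℝ => ∫ r in Set.Ioo (0 : ℝ) 2, (1 / (2 * t)) * g (r ^ 2 / t) * r ^ (2 * i + 1))
      (nhdsWithin 0 (Set.Ioi 0))
      (nhds (if i = 0 then (1 / 4) * ∫ u in Set.Ioi (0 : ℝ), g u else 0)) :=
  cone_type_one_contribution_general i g hg C δ hδ hbound
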